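/- arXiv:1509.05917 — 3 statements merged into one kernel-verified Lean document; each statement's English description precedes it below -/
import Mathlib

section
/- Let A_1, ..., A_m be non-negative matrices that define bounded operators on ℓ^p. Then the Hadamard product A_1 ∘ A_2 ∘ ... ∘ A_m defines a bounded operator on ℓ^p and ρ(A_1 ∘ A_2 ∘ ... ∘ A_m) ≤ ρ(A_1 A_2 ⋯ A_m). -/
open scoped ENNReal NNReal BigOperators InnerProductSpace

noncomputable section

/-- The sequence space `ℓ^p(ℕ)` (real scalars). -/
abbrev lpSeq (p : ℝ≥0∞) := lp (fun _ : ℕ => ℝ) p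

/-- The (infinite) non-negative matrix `a` defines the bounded operator `T` on `ℓ^p`:
for every `x ∈ ℓ^p` and every row index `i`, the series `∑_j a i j * x j` converges,
with sum equal to `(T x) i`. -/
def Represents (p : ℝ≥0∞) [Fact (1 ≤ p)] (a : ℕ → ℕ → ℝ)
    (T : lpSeq p →L[ℝ] lpSeq p) : Prop :=
  ∀ x : lpSeq p, ∀ i : ℕ, HasSum (fun j => a i j * x j) (T x i)

/-- Hadamard (entrywise) product of two matrices. -/
def hadamard (a b : ℕ → ℕ → ℝ) : ℕ → ℕ → ℝ := fun i j => a i j * b i j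

/-- Hadamard (entrywise) power `a^{(t)}`. -/
def hadPow (a : ℕ → ℕ → ℝ) (t : ℝ) : ℕ → ℕ → ℝ := fun i j => a i j ^ t

/-- Hadamard product of a finite family of matrices. -/
def hadProd {m : ℕ} (A : Fin m → ℕ → ℕ → ℝ) : ℕ → ℕ → ℝ := fun i j => ∏ k, A k i j

/-- Matrix product of two infinite matrices. -/
def matMul (a b : ℕ → ℕ → ℝ) : ℕ → ℕ → ℝ := fun i j => ∑' k, a i k * b k j

/-- The identity matrix. -/
def idMat : ℕ → ℕ → ℝ := fun i j => if i = j then 1 else 0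

/-- Product of a list of matrices. -/
def matListProd : List (ℕ → ℕ → ℝ) → ℕ → ℕ → ℝ
  | [] => idMat
  | a :: l => matMul a (matListProd l)

/-- Transposed matrix. -/
def transp (a : ℕ → ℕ → ℝ) : ℕ → ℕ → ℝ := fun i j => a j i

/-- The cyclic matrix product `A_i A_{i+1} ⋯ A_m A_1 ⋯ A_{i-1}` starting at index `i`. -/
def cycMatProd {m : ℕ} (A : Fin m → ℕ → ℕ → ℝ) (i : Fin m) : ℕ → ℕ → ℝ :=
  matListProd (List.ofFn fun k : Fin m => A (i + k))

/-- The cyclic operator product `T_i T_{i+1} ⋯ T_m T_1 ⋯ T_{i-1}` starting at index `i`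
(operator multiplication is composition). -/
def cycOpProd {m : ℕ} {p : ℝ≥0∞} [Fact (1 ≤ p)]
    (T : Fin m → lpSeq p →L[ℝ] lpSeq p) (i : Fin m) : lpSeq p →L[ℝ] lpSeq p :=
  (List.ofFn fun k : Fin m => T (i + k)).prod

/-- The numerical radius of a bounded operator on `ℓ²`:
`w(T) = sup { |⟨T f, f⟩| : ‖f‖ = 1 }`. -/
def numRadius (T : lpSeq 2 →L[ℝ] lpSeq 2) : ℝ :=
  sSup { r : ℝ | ∃ f : lpSeq 2, ‖f‖ = 1 ∧ r = |⟪T f, f⟫_ℝ| }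

/-!
Let `P = T₁ ⋯ T_m` and let `H` be the operator of the Hadamard product. For non-negative matrices
`(A ∘ B)(C ∘ D) ≤ (AC) ∘ (BD)` entrywise, so the entries of `H ^ N` are bounded by the products of
the entries of the cyclic words `W_t = T_t T_{t+1} ⋯ T_{t+N-1}`. Bounding all factors but one by
operator norms and using that, for positive operators, entrywise domination gives norm domination,
`‖H ^ N‖ ≤ ∏_t ‖W_t‖`. For `N = m (n + 1)` every `W_t` is a rotation of `P ^ (n + 1)`, whence
`‖H ^ (m (n + 1))‖ ≤ K ‖P ^ n‖ ^ m`.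

Over the reals `ρ(P) < u` alone does not give `‖P ^ n‖ = O(uⁿ)`, but for positive `P` it does
(Pringsheim): the resolvent above the growth rate of `P` is a positive Neumann series, and if that
growth rate were at least `u`, expanding the resolvent around it would produce a positive resolvent,
hence a growth bound, slightly below it.
-/

lemma exists_norm_pow_le_mul_pow {R : Type*} [NormedRing R] (a : R) :
    ∃ s, 0 < s ∧ ∃ C, ∀ n, ‖a ^ n‖ ≤ C * s ^ n := by
  refine ⟨‖a‖ + 1, by positivity, ‖(1 : R)‖ + 1, fun n => ?_⟩
  rcases n.eq_zero_or_pos with rfl | hn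
  · simp
  · calc ‖a ^ n‖ ≤ ‖a‖ ^ n := norm_pow_le' a hn
      _ ≤ 1 * (‖a‖ + 1) ^ n := by rw [one_mul]; gcongr; linarith
      _ ≤ (‖(1 : R)‖ + 1) * (‖a‖ + 1) ^ n := by gcongr; linarith [norm_nonneg (1 : R)]

section MonotoneNormCone

variable {A : Type*} [NormedRing A] [NormedAlgebra ℝ A]

/-- `K` stands for the positive elements, ordered by `a ≤ b ↔ b - a ∈ K`. -/
structure IsMonotoneNormCone (K : Subsemiring A) : Prop where
  isClosed : IsClosed (K : Set A)
  smul_mem : ∀ {c : ℝ}, 0 ≤ c → ∀ {a : A}, a ∈ K → c • a ∈ K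
  norm_le_norm : ∀ {a b : A}, a ∈ K → b - a ∈ K → ‖a‖ ≤ ‖b‖

namespace IsMonotoneNormCone

variable {K : Subsemiring A} {P R : A}

lemma norm_pow_le_of_mul_eq_one (hK : IsMonotoneNormCone K) (hP : P ∈ K) (hR : R ∈ K) {t : ℝ}
    (ht : 0 ≤ t) (h : (algebraMap ℝ A t - P) * R = 1) (n : ℕ) : ‖P ^ n‖ ≤ ‖R‖ * t ^ (n + 1) := by
  have htR : t • R = 1 + P * R := by
    rw [← h, Algebra.algebraMap_eq_smul_one, sub_mul, smul_one_mul]; abel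
  have hmem : ∀ n : ℕ, t ^ (n + 1) • R - P ^ n ∈ K := by
    intro n
    induction n with
    | zero => simpa [htR] using K.mul_mem hP hR
    | succ n ih =>
      have : t ^ (n + 2) • R - P ^ (n + 1) =
          t ^ (n + 1) • (1 : A) + P * (t ^ (n + 1) • R - P ^ n) := by
        rw [pow_succ t (n + 1), mul_smul, htR, smul_add, mul_sub, mul_smul_comm, pow_succ' P n]
        abel
      rw [this]
      exact K.add_mem (hK.smul_mem (by positivity) K.one_mem) (K.mul_mem hP ih)
  calc ‖P ^ n‖ ≤ ‖t ^ (n + 1) • R‖ := hK.norm_le_norm (K.pow_mem hP n) (hmem n)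
    _ = ‖R‖ * t ^ (n + 1) := by rw [norm_smul, Real.norm_of_nonneg (by positivity), mul_comm]

lemma exists_mem_mul_eq_one_of_norm_pow_le [CompleteSpace A] (hK : IsMonotoneNormCone K)
    (hP : P ∈ K) {s v C : ℝ} (hv : 0 ≤ v) (hvs : v < s) (hC : ∀ n, ‖P ^ n‖ ≤ C * v ^ n) :
    ∃ R ∈ K, (algebraMap ℝ A s - P) * R = 1 := by
  have hs : 0 < s := hv.trans_lt hvs
  set x := s⁻¹ • P
  have hx : Summable (x ^ ·) := by
    refine .of_norm_bounded ((summable_geometric_of_lt_one (by positivity)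
      ((div_lt_one hs).mpr hvs)).mul_left C) fun n => ?_
    rw [smul_pow, norm_smul, norm_pow, Real.norm_of_nonneg (inv_nonneg.mpr hs.le), div_pow,
      inv_pow, mul_div_assoc', mul_comm, div_eq_mul_inv]
    exact mul_le_mul_of_nonneg_right (hC n) (by positivity)
  refine ⟨s⁻¹ • ∑' n, x ^ n, hK.smul_mem (by positivity)
    (tsum_mem hK.isClosed fun n => K.pow_mem (hK.smul_mem (by positivity) hP) n), ?_⟩
  rw [mul_smul_comm, ← smul_mul_assoc, smul_sub, Algebra.algebraMap_eq_smul_one, smul_smul,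
    inv_mul_cancel₀ hs.ne', one_smul]
  exact hx.one_sub_mul_tsum_pow

lemma exists_mem_mul_eq_one_of_sub [CompleteSpace A] (hK : IsMonotoneNormCone K) (hR : R ∈ K)
    {t : ℝ} (h : (algebraMap ℝ A t - P) * R = 1) {η : ℝ} (hη : 0 ≤ η) (hηR : η * ‖R‖ < 1) :
    ∃ W ∈ K, (algebraMap ℝ A (t - η) - P) * W = 1 := by
  have hx : ‖η • R‖ < 1 := by rwa [norm_smul, Real.norm_of_nonneg hη]
  refine ⟨R * ∑' n, (η • R) ^ n, K.mul_mem hR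
    (tsum_mem hK.isClosed fun n => K.pow_mem (hK.smul_mem hη hR) n), ?_⟩
  have : (algebraMap ℝ A (t - η) - P) * R = 1 - η • R := by
    rw [map_sub, sub_right_comm, sub_mul, h, Algebra.algebraMap_eq_smul_one, smul_one_mul]
  rw [← mul_assoc, this, mul_neg_geom_series _ hx]

theorem exists_norm_pow_le_of_spectralRadius_lt [CompleteSpace A] (hK : IsMonotoneNormCone K)
    (hP : P ∈ K) {u : ℝ≥0} (hu : 0 < u) (hPu : spectralRadius ℝ P < u) :
    ∃ C, ∀ n, ‖P ^ n‖ ≤ C * (u : ℝ) ^ n := by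
  set S := {s : ℝ | 0 < s ∧ ∃ C, ∀ n, ‖P ^ n‖ ≤ C * s ^ n}
  have hS : S.Nonempty := exists_norm_pow_le_mul_pow P
  have hS0 : BddBelow S := ⟨0, fun s hs => hs.1.le⟩
  set r := sInf S
  suffices hr : r < u by
    obtain ⟨v, ⟨hv, C, hC⟩, hvu⟩ := exists_lt_of_csInf_lt hS hr
    refine ⟨C, fun n => (hC n).trans ?_⟩
    have : 0 ≤ C := by simpa using (norm_nonneg _).trans (hC 0)
    gcongr
  by_contra! hur
  have hunit : ∀ t : ℝ, u ≤ t → IsUnit (algebraMap ℝ A t - P) := fun t ht =>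
    spectrum.mem_resolventSet_iff.mp <| spectrum.mem_resolventSet_of_spectralRadius_lt <|
      hPu.trans_le <| by
        rw [Real.nnnorm_of_nonneg (u.coe_nonneg.trans ht), ENNReal.coe_le_coe]; exact ht
  have hcont : ContinuousAt (fun t : ℝ => Ring.inverse (algebraMap ℝ A t - P)) r := by
    obtain ⟨w, hw⟩ := hunit r hur
    have hinv : ContinuousAt Ring.inverse (algebraMap ℝ A r - P) :=
      hw ▸ NormedRing.inverse_continuousAt w
    exact hinv.comp (f := fun t : ℝ => algebraMap ℝ A t - P)
      ((continuous_algebraMap ℝ A).sub continuous_const).continuousAt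
  have hRmem : Ring.inverse (algebraMap ℝ A r - P) ∈ K := by
    refine hK.isClosed.mem_of_tendsto (hcont.tendsto.mono_left nhdsWithin_le_nhds)
      (eventually_nhdsWithin_of_forall fun t (ht : t ∈ Set.Ioi r) => ?_)
    obtain ⟨v, ⟨hv, C, hC⟩, hvt⟩ := exists_lt_of_csInf_lt hS ht
    obtain ⟨R, hR, hRt⟩ := hK.exists_mem_mul_eq_one_of_norm_pow_le hP hv.le hvt hC
    have hU := hunit t (hur.trans ht.le)
    rwa [← mul_one (Ring.inverse _), ← hRt, ← mul_assoc, Ring.inverse_mul_cancel _ hU, one_mul]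
  have hr : 0 < r := (NNReal.coe_pos.mpr hu).trans_le hur
  obtain ⟨c, hc, hcR⟩ := exists_pos_mul_lt one_pos ‖Ring.inverse (algebraMap ℝ A r - P)‖
  set η := min c (r / 2)
  have hη : 0 < η := lt_min hc (half_pos hr)
  have hηr : η ≤ r / 2 := min_le_right _ _
  obtain ⟨W, hW, hWr⟩ := hK.exists_mem_mul_eq_one_of_sub hRmem
    (Ring.mul_inverse_cancel _ (hunit r hur)) hη.le
    (by rw [mul_comm]; exact hcR.trans_le' (by gcongr; exact min_le_left _ _))
  have hmem : r - η ∈ S := ⟨by linarith, ‖W‖ * (r - η), fun n => by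
    rw [mul_assoc, ← pow_succ']
    exact hK.norm_pow_le_of_mul_eq_one hP hW (by linarith) hWr n⟩
  linarith [csInf_le hS0 hmem]

end IsMonotoneNormCone

end MonotoneNormCone

open Filter Topology in
lemma le_of_forall_pow_succ_le_mul_pow {w v D : ℝ} (hv : 0 ≤ v)
    (h : ∀ n : ℕ, w ^ (n + 1) ≤ D * v ^ n) : w ≤ v := by
  by_contra! hvw
  have hw : 0 < w := hv.trans_lt hvw
  have hlim : Tendsto (fun n : ℕ => D * (v / w) ^ n) atTop (𝓝 (D * 0)) :=
    (tendsto_pow_atTop_nhds_zero_of_lt_one (by positivity)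
      ((div_lt_one hw).mpr hvw)).const_mul D
  have hle : ∀ n : ℕ, w ≤ D * (v / w) ^ n := fun n => by
    rw [div_pow, mul_div_assoc', le_div_iff₀ (by positivity), ← pow_succ']
    exact h n
  linarith [ge_of_tendsto' hlim hle]

lemma spectralRadius_le_of_norm_pow_le {𝕜 A : Type*} [NormedField 𝕜] [NormedRing A]
    [NormedAlgebra 𝕜 A] [CompleteSpace A] (a : A) {m : ℕ} (hm : 0 < m) {C : ℝ} {v : ℝ≥0}
    (h : ∀ n, ‖a ^ (m * (n + 1))‖ ≤ C * ((v : ℝ) ^ m) ^ n) : spectralRadius 𝕜 a ≤ v := by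
  refine iSup₂_le fun k hk => ENNReal.coe_le_coe.mpr ?_
  rw [← NNReal.coe_le_coe, coe_nnnorm]
  refine (pow_le_pow_iff_left₀ (norm_nonneg k) v.coe_nonneg hm.ne').mp <|
    le_of_forall_pow_succ_le_mul_pow (by positivity) (D := C * ‖(1 : A)‖) fun n => ?_
  calc (‖k‖ ^ m) ^ (n + 1) = ‖k ^ (m * (n + 1))‖ := by rw [norm_pow, pow_mul]
    _ ≤ ‖a ^ (m * (n + 1))‖ * ‖(1 : A)‖ :=
        spectrum.norm_le_norm_mul_of_mem (spectrum.pow_mem_pow a _ hk)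
    _ ≤ C * ‖(1 : A)‖ * ((v : ℝ) ^ m) ^ n := by
        rw [mul_right_comm]; exact mul_le_mul_of_nonneg_right (h n) (norm_nonneg _)

section LpOperators

variable {p : ℝ≥0∞}

def lpAbs (x : lpSeq p) : lpSeq p := ⟨fun i => ‖x i‖, (lp.memℓp x).norm⟩

@[simp] lemma lpAbs_apply (x : lpSeq p) (i : ℕ) : lpAbs x i = ‖x i‖ := rfl

lemma lp.single_one_apply_nonneg (j k : ℕ) : 0 ≤ (lp.single p j 1 : lpSeq p) k := by
  rw [lp.single_apply, Pi.single_apply]; split_ifs <;> norm_num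

variable [Fact (1 ≤ p)]

lemma ne_zero_of_fact_one_le : p ≠ 0 := (zero_lt_one.trans_le Fact.out).ne'

lemma norm_lpAbs (x : lpSeq p) : ‖lpAbs x‖ = ‖x‖ :=
  le_antisymm (lp.norm_mono ne_zero_of_fact_one_le fun i => by simp)
    (lp.norm_mono ne_zero_of_fact_one_le fun i => by simp)

variable (p) in
def lpPositiveCone : Subsemiring (lpSeq p →L[ℝ] lpSeq p) where
  carrier := {S | ∀ x : lpSeq p, (∀ i, 0 ≤ x i) → ∀ i, 0 ≤ S x i}
  mul_mem' hS hS' x hx i := hS _ (hS' x hx) i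
  one_mem' _ hx := hx
  add_mem' hS hS' x hx i := by simpa using add_nonneg (hS x hx i) (hS' x hx i)
  zero_mem' _ _ i := by simp

lemma abs_apply_le_apply_lpAbs {S : lpSeq p →L[ℝ] lpSeq p} (hS : S ∈ lpPositiveCone p)
    (x : lpSeq p) (i : ℕ) : |S x i| ≤ S (lpAbs x) i := by
  have h₁ := hS (lpAbs x - x) (fun j => by simp [le_abs_self]) i
  have h₂ := hS (lpAbs x + x) (fun j => by have := neg_abs_le (x j); simp; linarith) i
  simp only [map_sub, map_add, lp.coeFn_sub, lp.coeFn_add, Pi.sub_apply, Pi.add_apply] at h₁ h₂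
  exact abs_le.mpr ⟨by linarith, by linarith⟩

lemma isMonotoneNormCone_lpPositiveCone : IsMonotoneNormCone (lpPositiveCone p) where
  isClosed := by
    change IsClosed
      {S : lpSeq p →L[ℝ] lpSeq p | ∀ x : lpSeq p, (∀ i, 0 ≤ x i) → ∀ i, 0 ≤ S x i}
    simp only [Set.ofPred_forall]
    exact isClosed_iInter fun x => isClosed_iInter fun _ => isClosed_iInter fun i =>
      isClosed_le continuous_const
        ((lp.evalCLM ℝ _ p i).continuous.comp (ContinuousLinearMap.apply ℝ _ x).continuous)
  smul_mem hc _ hS x hx i := by simpa using mul_nonneg hc (hS x hx i)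
  norm_le_norm {S S'} hS hS' := S.opNorm_le_bound (norm_nonneg _) fun x => by
    calc ‖S x‖ ≤ ‖S' (lpAbs x)‖ := lp.norm_mono ne_zero_of_fact_one_le fun i => by
          have := hS' (lpAbs x) (fun j => by simp) i
          simp only [sub_apply, lp.coeFn_sub, Pi.sub_apply] at this
          rw [Real.norm_eq_abs, Real.norm_eq_abs]
          linarith [abs_apply_le_apply_lpAbs hS x i, le_abs_self (S' (lpAbs x) i)]
      _ ≤ ‖S'‖ * ‖x‖ := by simpa only [norm_lpAbs] using S'.le_opNorm (lpAbs x)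

def matrixEntry (S : lpSeq p →L[ℝ] lpSeq p) (i j : ℕ) : ℝ := S (lp.single p j 1) i

lemma matrixEntry_nonneg {S : lpSeq p →L[ℝ] lpSeq p} (hS : S ∈ lpPositiveCone p) (i j : ℕ) :
    0 ≤ matrixEntry S i j :=
  hS _ (lp.single_one_apply_nonneg j) i

lemma matrixEntry_le_norm (S : lpSeq p →L[ℝ] lpSeq p) (i j : ℕ) : matrixEntry S i j ≤ ‖S‖ :=
  calc matrixEntry S i j ≤ ‖S (lp.single p j 1)‖ :=
        (Real.le_norm_self _).trans (lp.norm_apply_le_norm ne_zero_of_fact_one_le _ i)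
    _ ≤ ‖S‖ * ‖(lp.single p j 1 : lpSeq p)‖ := S.le_opNorm _
    _ = ‖S‖ := by rw [lp.norm_single (zero_lt_one.trans_le Fact.out), norm_one, mul_one]

lemma matrixEntry_smul (c : ℝ) (S : lpSeq p →L[ℝ] lpSeq p) (i j : ℕ) :
    matrixEntry (c • S) i j = c * matrixEntry S i j := by
  simp [matrixEntry]

lemma matrixEntry_sub (S S' : lpSeq p →L[ℝ] lpSeq p) (i j : ℕ) :
    matrixEntry (S - S') i j = matrixEntry S i j - matrixEntry S' i j := by
  simp [matrixEntry]

lemma represents_matrixEntry (hp : p ≠ ∞) (S : lpSeq p →L[ℝ] lpSeq p) :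
    Represents p (matrixEntry S) S := by
  intro x i
  have hsingle : ∀ j, S (lp.single p j (x j)) i = matrixEntry S i j * x j := fun j => by
    have : lp.single p j (x j) = x j • (lp.single p j 1 : lpSeq p) := by
      rw [← lp.single_smul, smul_eq_mul, mul_one]
    simp [this, matrixEntry, mul_comm]
  have h := ((lp.hasSum_single hp x).mapL S).mapL (lp.evalCLM ℝ _ p i)
  change HasSum (fun j => S (lp.single p j (x j)) i) (S x i) at h
  simpa only [hsingle] using h

namespace Represents

variable {a : ℕ → ℕ → ℝ} {S : lpSeq p →L[ℝ] lpSeq p}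

lemma matrixEntry_eq (h : Represents p a S) (i j : ℕ) : matrixEntry S i j = a i j := by
  refine (h _ i).unique ?_
  convert hasSum_ite_eq j (a i j) using 2 with k
  rw [lp.single_apply, Pi.single_apply]
  split_ifs with hk <;> simp [hk]

lemma hasSum_matrixEntry_mul (h : Represents p a S) (S' : lpSeq p →L[ℝ] lpSeq p) (i j : ℕ) :
    HasSum (fun k => a i k * matrixEntry S' k j) (matrixEntry (S * S') i j) :=
  h _ i

lemma mem_lpPositiveCone (h : Represents p a S) (ha : ∀ i j, 0 ≤ a i j) :
    S ∈ lpPositiveCone p :=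
  fun x hx i => (h x i).nonneg fun j => mul_nonneg (ha i j) (hx j)

lemma smul (c : ℝ) (h : Represents p a S) : Represents p (fun i j => c * a i j) (c • S) := by
  intro x i
  simpa [mul_assoc] using (h x i).mul_left c

lemma exists_of_abs_le (h : Represents p a S) {c : ℕ → ℕ → ℝ} (hca : ∀ i j, |c i j| ≤ a i j) :
    ∃ H : lpSeq p →L[ℝ] lpSeq p, Represents p c H := by
  have hdom : ∀ (x : lpSeq p) i j, ‖c i j * x j‖ ≤ a i j * lpAbs x j := fun x i j => by
    rw [norm_mul, lpAbs_apply, Real.norm_eq_abs]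
    exact mul_le_mul_of_nonneg_right (hca i j) (norm_nonneg _)
  have hsum : ∀ (x : lpSeq p) i, Summable fun j => c i j * x j := fun x i =>
    .of_norm_bounded (h (lpAbs x) i).summable (hdom x i)
  have hle : ∀ (x : lpSeq p) i, ‖∑' j, c i j * x j‖ ≤ S (lpAbs x) i := fun x i =>
    tsum_of_norm_bounded (h (lpAbs x) i) (hdom x i)
  let L : lpSeq p →ₗ[ℝ] lpSeq p :=
    { toFun x := ⟨fun i => ∑' j, c i j * x j, (lp.memℓp (S (lpAbs x))).mono (hle x)⟩
      map_add' x y := lp.ext <| funext fun i => by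
        simp only [lp.coeFn_add, Pi.add_apply, mul_add]
        exact (hsum x i).tsum_add (hsum y i)
      map_smul' r x := lp.ext <| funext fun i => by
        simp [← tsum_mul_left, mul_left_comm] }
  refine ⟨L.mkContinuous ‖S‖ fun x => ?_, fun x i => (hsum x i).hasSum⟩
  calc ‖L x‖ ≤ ‖S (lpAbs x)‖ := lp.norm_mono ne_zero_of_fact_one_le fun i =>
        (hle x i).trans (Real.le_norm_self _)
    _ ≤ ‖S‖ * ‖x‖ := by simpa only [norm_lpAbs] using S.le_opNorm (lpAbs x)

end Represents

lemma norm_le_of_matrixEntry_le (hp : p ≠ ∞) {S S' : lpSeq p →L[ℝ] lpSeq p}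
    (hS : S ∈ lpPositiveCone p) (h : ∀ i j, matrixEntry S i j ≤ matrixEntry S' i j) : ‖S‖ ≤ ‖S'‖ :=
  isMonotoneNormCone_lpPositiveCone.norm_le_norm hS <|
    (represents_matrixEntry hp _).mem_lpPositiveCone fun i j => by
      simpa [matrixEntry_sub] using h i j

end LpOperators

lemma Finset.prod_le_mul_prod_erase {ι R : Type*} [DecidableEq ι] [CommSemiring R]
    [PartialOrder R] [IsOrderedRing R] {s : Finset ι} {f g : ι → R} {i : ι} (hi : i ∈ s)
    (hf : ∀ j ∈ s, 0 ≤ f j) (hfg : ∀ j ∈ s.erase i, f j ≤ g j) :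
    ∏ j ∈ s, f j ≤ f i * ∏ j ∈ s.erase i, g j := by
  rw [← Finset.mul_prod_erase s f hi]
  exact mul_le_mul_of_nonneg_left
    (Finset.prod_le_prod (fun j hj => hf j (Finset.mem_of_mem_erase hj)) hfg) (hf i hi)

open Finset in
lemma summable_prod_and_tsum_prod_le {ι β : Type*} [Fintype ι] [Nonempty ι] {f : ι → β → ℝ}
    (hf₀ : ∀ t k, 0 ≤ f t k) (hf : ∀ t, Summable (f t)) :
    Summable (fun k => ∏ t, f t k) ∧ ∑' k, ∏ t, f t k ≤ ∏ t, ∑' k, f t k := by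
  classical
  obtain ⟨t₀⟩ := ‹Nonempty ι›
  set c := ∏ t ∈ univ.erase t₀, ∑' k, f t k
  have hle : ∀ k, ∏ t, f t k ≤ f t₀ k * c := fun k =>
    prod_le_mul_prod_erase (mem_univ t₀) (fun t _ => hf₀ t k)
      fun t _ => (hf t).le_tsum k fun k' _ => hf₀ t k'
  have hsum : Summable (fun k => ∏ t, f t k) :=
    .of_nonneg_of_le (fun k => prod_nonneg fun t _ => hf₀ t k) hle ((hf t₀).mul_right c)
  refine ⟨hsum, ?_⟩
  calc ∑' k, ∏ t, f t k ≤ ∑' k, f t₀ k * c := hsum.tsum_le_tsum hle ((hf t₀).mul_right c)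
    _ = ∏ t, ∑' k, f t k := by
        rw [tsum_mul_right, mul_prod_erase _ (fun t => ∑' k, f t k) (mem_univ t₀)]

section CycProd

open Fin.NatCast Fin.CommRing

variable {M : Type*} [Monoid M] {m : ℕ} [NeZero m]

def cycProd (T : Fin m → M) (t : Fin m) : ℕ → M
  | 0 => 1
  | N + 1 => T t * cycProd T (t + 1) N

variable (T : Fin m → M)

lemma cycProd_add (t : Fin m) (N N' : ℕ) :
    cycProd T t (N + N') = cycProd T t N * cycProd T (t + N) N' := by
  induction N generalizing t with
  | zero => simp [cycProd]
  | succ N ih =>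
    rw [Nat.add_right_comm, cycProd, ih, cycProd, mul_assoc]
    push_cast
    ring_nf

lemma cycProd_mul (t : Fin m) (n : ℕ) : cycProd T t (m * n) = cycProd T t m ^ n := by
  induction n with
  | zero => rw [Nat.mul_zero, pow_zero]; rfl
  | succ n ih =>
    rw [Nat.mul_succ, cycProd_add, ih, Fin.natCast_eq_zero.mpr (dvd_mul_right m n), add_zero,
      pow_succ]

lemma cycProd_mul_succ (t : Fin m) (n : ℕ) :
    cycProd T t (m * (n + 1)) = cycProd T t (m - t) * cycProd T 0 m ^ n * cycProd T 0 t := by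
  have ht : t + ((m - t : ℕ) : Fin m) = 0 := by
    rw [Nat.cast_sub t.isLt.le, Fin.natCast_self, Fin.cast_val_eq_self]; ring
  rw [show m * (n + 1) = (m - t) + (m * n + t) by rw [Nat.mul_succ]; omega, cycProd_add, ht,
    cycProd_add, cycProd_mul, mul_assoc, Fin.natCast_eq_zero.mpr (dvd_mul_right m n),
    zero_add]

lemma cycProd_zero_self : cycProd T 0 m = (List.ofFn T).prod := by
  suffices ∀ (t : Fin m) N, cycProd T t N = (List.ofFn fun k : Fin N => T (t + (k : ℕ))).prod by
    simp [this]
  intro t N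
  induction N generalizing t with
  | zero => rfl
  | succ N ih =>
    rw [cycProd, ih, List.ofFn_succ, List.prod_cons]
    congr 2
    · simp
    · exact congrArg List.ofFn <| funext fun k => by
        congr 1; simp only [Fin.val_succ]; push_cast; ring

lemma cycProd_mem {S : Type*} [SetLike S M] [SubmonoidClass S M] {s : S} (hT : ∀ t, T t ∈ s)
    (t : Fin m) (N : ℕ) : cycProd T t N ∈ s := by
  induction N generalizing t with
  | zero => exact one_mem s
  | succ N ih => exact mul_mem (hT t) (ih _)

end CycProd

section Hadamard

open Finset

variable {p : ℝ≥0∞} [Fact (1 ≤ p)] {m : ℕ} [NeZero m] {A : Fin m → ℕ → ℕ → ℝ}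
  {T : Fin m → lpSeq p →L[ℝ] lpSeq p} {H : lpSeq p →L[ℝ] lpSeq p}

lemma exists_represents_hadProd (hA : ∀ k i j, 0 ≤ A k i j)
    (hT : ∀ k, Represents p (A k) (T k)) : ∃ H, Represents p (hadProd A) H := by
  refine ((hT 0).smul (∏ k ∈ univ.erase 0, ‖T k‖)).exists_of_abs_le fun i j => ?_
  rw [hadProd, abs_of_nonneg (prod_nonneg fun k _ => hA k i j), mul_comm]
  exact prod_le_mul_prod_erase (mem_univ 0) (fun k _ => hA k i j)
    fun k _ => (hT k).matrixEntry_eq i j ▸ matrixEntry_le_norm (T k) i j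

lemma matrixEntry_pow_le_prod_matrixEntry_cycProd (hA : ∀ k i j, 0 ≤ A k i j)
    (hT : ∀ k, Represents p (A k) (T k)) (hH : Represents p (hadProd A) H) (N i j : ℕ) :
    matrixEntry (H ^ N) i j ≤ ∏ t, matrixEntry (cycProd T t N) i j := by
  induction N generalizing i j with
  | zero =>
    by_cases hij : i = j
    · simp [cycProd, matrixEntry, hij]
    · simp [cycProd, matrixEntry, hij, lp.single_apply, NeZero.ne m]
  | succ N ih =>
    have hTK : ∀ t, T t ∈ lpPositiveCone p := fun t => (hT t).mem_lpPositiveCone (hA t)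
    have hf₀ : ∀ t k, 0 ≤ A t i k * matrixEntry (cycProd T (t + 1) N) k j := fun t k =>
      mul_nonneg (hA t i k) (matrixEntry_nonneg (cycProd_mem T hTK _ N) k j)
    obtain ⟨hsum, hle⟩ := summable_prod_and_tsum_prod_le hf₀
      fun t => ((hT t).hasSum_matrixEntry_mul _ i j).summable
    have hpt : ∀ k, hadProd A i k * matrixEntry (H ^ N) k j ≤
        ∏ t, A t i k * matrixEntry (cycProd T (t + 1) N) k j := fun k => by
      have hshift : ∏ t, matrixEntry (cycProd T (t + 1) N) k j =
          ∏ t, matrixEntry (cycProd T t N) k j :=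
        Equiv.prod_comp (Equiv.addRight 1) fun t => matrixEntry (cycProd T t N) k j
      rw [prod_mul_distrib, hshift]
      exact mul_le_mul_of_nonneg_left (ih k j) (prod_nonneg fun t _ => hA t i k)
    have hHN := hH.hasSum_matrixEntry_mul (H ^ N) i j
    rw [← pow_succ'] at hHN
    calc matrixEntry (H ^ (N + 1)) i j = ∑' k, hadProd A i k * matrixEntry (H ^ N) k j :=
          hHN.tsum_eq.symm
      _ ≤ ∑' k, ∏ t, A t i k * matrixEntry (cycProd T (t + 1) N) k j :=
          hHN.summable.tsum_le_tsum hpt hsum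
      _ ≤ ∏ t, ∑' k, A t i k * matrixEntry (cycProd T (t + 1) N) k j := hle
      _ = ∏ t, matrixEntry (cycProd T t (N + 1)) i j :=
          prod_congr rfl fun t _ => ((hT t).hasSum_matrixEntry_mul _ i j).tsum_eq

lemma norm_pow_le_prod_norm_cycProd (hp : p ≠ ∞) (hA : ∀ k i j, 0 ≤ A k i j)
    (hT : ∀ k, Represents p (A k) (T k)) (hH : Represents p (hadProd A) H) (N : ℕ) :
    ‖H ^ N‖ ≤ ∏ t, ‖cycProd T t N‖ := by
  have hTK : ∀ t, T t ∈ lpPositiveCone p := fun t => (hT t).mem_lpPositiveCone (hA t)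
  set c := ∏ t ∈ univ.erase 0, ‖cycProd T t N‖
  have hc : 0 ≤ c := prod_nonneg fun t _ => norm_nonneg _
  calc ‖H ^ N‖ ≤ ‖c • cycProd T 0 N‖ := by
        refine norm_le_of_matrixEntry_le hp (Subsemiring.pow_mem _
          (hH.mem_lpPositiveCone fun i j => prod_nonneg fun k _ => hA k i j) N) fun i j => ?_
        rw [matrixEntry_smul, mul_comm]
        exact (matrixEntry_pow_le_prod_matrixEntry_cycProd hA hT hH N i j).trans <|
          prod_le_mul_prod_erase (mem_univ 0)
            (fun t _ => matrixEntry_nonneg (cycProd_mem T hTK t N) i j)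
            fun t _ => matrixEntry_le_norm _ i j
    _ = ∏ t, ‖cycProd T t N‖ := by
        rw [norm_smul, Real.norm_of_nonneg hc, mul_comm]
        exact mul_prod_erase univ (fun t => ‖cycProd T t N‖) (mem_univ 0)

end Hadamard

/-- the Hadamard product `A₁ ∘ ⋯ ∘ A_m` defines a bounded operator on `ℓ^p`
and `ρ(A₁ ∘ ⋯ ∘ A_m) ≤ ρ(A₁ A₂ ⋯ A_m)`. -/
theorem spectralRadius_hadamard_le
    (p : ℝ≥0∞) [Fact (1 ≤ p)] (hp : p ≠ ∞) (m : ℕ) (hm : 0 < m)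
    (A : Fin m → ℕ → ℕ → ℝ) (hA : ∀ k i j, 0 ≤ A k i j)
    (T : Fin m → lpSeq p →L[ℝ] lpSeq p) (hT : ∀ k, Represents p (A k) (T k)) :
    ∃ H : lpSeq p →L[ℝ] lpSeq p,
      Represents p (hadProd A) H ∧
      spectralRadius ℝ H ≤ spectralRadius ℝ (List.ofFn T).prod := by
  have : NeZero m := ⟨hm.ne'⟩
  obtain ⟨H, hH⟩ := exists_represents_hadProd hA hT
  refine ⟨H, hH, le_of_forall_gt_imp_ge_of_dense fun c hc => ?_⟩
  obtain ⟨u, hPu, huc⟩ := ENNReal.lt_iff_exists_nnreal_btwn.mp hc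
  refine le_trans ?_ huc.le
  set P := cycProd T 0 m
  have hP : P ∈ lpPositiveCone p := cycProd_mem T (fun k => (hT k).mem_lpPositiveCone (hA k)) 0 m
  rw [← cycProd_zero_self] at hPu
  obtain ⟨C, hC⟩ := isMonotoneNormCone_lpPositiveCone.exists_norm_pow_le_of_spectralRadius_lt hP
    (pos_of_gt (ENNReal.coe_lt_coe.mp (hPu.trans_le' bot_le))) hPu
  set K := ∏ t : Fin m, ‖cycProd T t (m - t)‖ * ‖cycProd T 0 t‖
  refine spectralRadius_le_of_norm_pow_le H hm (C := K * C ^ m) fun n => ?_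
  calc ‖H ^ (m * (n + 1))‖ ≤ ∏ t, ‖cycProd T t (m * (n + 1))‖ :=
        norm_pow_le_prod_norm_cycProd hp hA hT hH _
    _ ≤ ∏ t : Fin m, ‖cycProd T t (m - t)‖ * ‖cycProd T 0 t‖ * ‖P ^ n‖ :=
        Finset.prod_le_prod (fun t _ => norm_nonneg _) fun t _ => by
          rw [cycProd_mul_succ, mul_right_comm]; exact norm_mul₃_le
    _ = K * ‖P ^ n‖ ^ m := by rw [Finset.prod_mul_distrib, Finset.prod_const, Finset.card_fin]
    _ ≤ K * (C * u ^ n) ^ m := by gcongr; exact hC n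
    _ = K * C ^ m * ((u : ℝ) ^ m) ^ n := by ring
end
end

section
/- Let A_1, ..., A_m be non-negative matrices that define bounded operators on ℓ^p, and define N(t) = (‖A_1^{(t)}‖ ‖A_2^{(t)}‖ ⋯ ‖A_m^{(t)}‖)^{1/t} for t ≥ 1. Then N is a decreasing (non-increasing) function on [1, ∞), and ‖A_1 ∘ A_2 ∘ ⋯ ∘ A_m‖ ≤ N(t) for every t ∈ [1, m]. -/
/-!
Monotonicity of `N`: testing a non-negative matrix `B` on unit vectors shows that every entry of
`B` is at most `‖B‖`, so for `0 < t ≤ u` the entries of `A^{(u)}` satisfy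
`a^u = (a^t)^{u/t} ≤ ‖A^{(t)}‖^{u/t - 1} a^t`. Entrywise domination of non-negative matrices
passes to operator norms, hence `‖A^{(u)}‖^{1/u} ≤ ‖A^{(t)}‖^{1/t}` for every factor of `N`.

Hadamard product: `(∏ₖ aₖ) |xⱼ| = ∏ₖ (aₖ^m |xⱼ|)^{1/m}`, so Hölder's inequality with `m` equal
weights, applied first along each row and then to the `p`-th powers over the rows, bounds the
Hadamard product operator by `N(m)`, which is at most `N(t)` for `t ≤ m`.
-/

open scoped ENNReal NNReal BigOperators InnerProductSpace

noncomputable section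

section

variable {p : ℝ≥0∞}

def absLp (x : lpSeq p) : lpSeq p := ⟨fun i => ‖x i‖, (lp.memℓp x).norm⟩

@[simp] lemma absLp_apply (x : lpSeq p) (i : ℕ) : absLp x i = ‖x i‖ := rfl

variable [Fact (1 ≤ p)]

lemma exponent_pos : 0 < p := zero_lt_one.trans_le Fact.out

lemma norm_absLp (x : lpSeq p) : ‖absLp x‖ = ‖x‖ :=
  le_antisymm (lp.norm_mono exponent_pos.ne' fun i => by simp)
    (lp.norm_mono exponent_pos.ne' fun i => by simp)

lemma toReal_exponent_pos (hp : p ≠ ∞) : 0 < p.toReal :=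
  ENNReal.toReal_pos exponent_pos.ne' hp

lemma memℓp_iff_tsum_enorm_rpow_ne_top (hp : p ≠ ∞) {f : ℕ → ℝ} :
    Memℓp f p ↔ ∑' i, ‖f i‖ₑ ^ p.toReal ≠ ∞ := by
  have hq := toReal_exponent_pos hp
  have h : ∀ i, ‖f i‖ₑ ^ p.toReal = ‖‖f i‖ ^ p.toReal‖ₑ := fun i => by
    rw [Real.enorm_of_nonneg (Real.rpow_nonneg (norm_nonneg (f i)) _),
      ← ENNReal.ofReal_rpow_of_nonneg (norm_nonneg _) hq.le, ofReal_norm]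
  simp_rw [memℓp_gen_iff hq, h, tsum_enorm_ne_top_iff_summable_norm, Real.norm_of_nonneg
    (Real.rpow_nonneg (norm_nonneg _) _)]

lemma tsum_enorm_rpow_eq (hp : p ≠ ∞) (f : lpSeq p) :
    ∑' i, ‖f i‖ₑ ^ p.toReal = ‖f‖ₑ ^ p.toReal := by
  have hq := toReal_exponent_pos hp
  simp_rw [← ofReal_norm, ENNReal.ofReal_rpow_of_nonneg (norm_nonneg _) hq.le]
  rw [← ENNReal.ofReal_tsum_of_nonneg (fun i => by positivity) ((lp.memℓp f).summable hq),
    lp.norm_rpow_eq_tsum hq]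

namespace Represents

variable {a b : ℕ → ℕ → ℝ} {T Ta Tb : lpSeq p →L[ℝ] lpSeq p}

lemma apply_eq_tsum (h : Represents p a T) (x : lpSeq p) (i : ℕ) :
    T x i = ∑' j, a i j * x j :=
  (h x i).tsum_eq.symm

lemma apply_absLp_eq_tsum (h : Represents p a T) (x : lpSeq p) (i : ℕ) :
    T (absLp x) i = ∑' j, a i j * ‖x j‖ :=
  h.apply_eq_tsum _ i

lemma abs_apply_le (h : Represents p a T) (ha : ∀ i j, 0 ≤ a i j) (x : lpSeq p) (i : ℕ) :
    |T x i| ≤ T (absLp x) i := by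
  have hnorm : (fun j => ‖a i j * x j‖) = fun j => a i j * ‖x j‖ := by
    ext j; rw [norm_mul, Real.norm_of_nonneg (ha i j)]
  rw [← Real.norm_eq_abs, h.apply_eq_tsum, h.apply_absLp_eq_tsum, ← hnorm]
  exact norm_tsum_le_tsum_norm (hnorm ▸ (h (absLp x) i).summable)

lemma enorm_apply_absLp (h : Represents p a T) (ha : ∀ i j, 0 ≤ a i j) (x : lpSeq p) (i : ℕ) :
    ‖T (absLp x) i‖ₑ = ∑' j, ‖a i j * x j‖ₑ := by
  have hnonneg : ∀ j, 0 ≤ a i j * ‖x j‖ := fun j => mul_nonneg (ha i j) (norm_nonneg _)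
  rw [h.apply_absLp_eq_tsum, Real.enorm_of_nonneg (tsum_nonneg hnonneg),
    ENNReal.ofReal_tsum_of_nonneg hnonneg (h (absLp x) i).summable]
  congr 1; ext j
  rw [enorm_mul, ← ofReal_norm, ← ofReal_norm, ← ENNReal.ofReal_mul (norm_nonneg _),
    Real.norm_of_nonneg (ha i j)]

lemma abs_le_opNorm (h : Represents p a T) (i j : ℕ) : |a i j| ≤ ‖T‖ := by
  set e : lpSeq p := lp.single p j 1
  have hcol : T e i = a i j := by
    refine (h e i).unique ?_
    convert hasSum_ite_eq j (a i j) using 1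
    ext j'
    by_cases hj : j' = j <;> simp [e, lp.single_apply, hj]
  calc |a i j| = ‖T e i‖ := by rw [hcol, Real.norm_eq_abs]
    _ ≤ ‖T e‖ := lp.norm_apply_le_norm exponent_pos.ne' _ i
    _ ≤ ‖T‖ * ‖e‖ := T.le_opNorm e
    _ = ‖T‖ := by rw [lp.norm_single exponent_pos, norm_one, mul_one]

lemma opNorm_le_mul_of_le {c : ℝ} (hc : 0 ≤ c) (hb : ∀ i j, 0 ≤ b i j)
    (hba : ∀ i j, b i j ≤ c * a i j) (hTa : Represents p a Ta) (hTb : Represents p b Tb) :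
    ‖Tb‖ ≤ c * ‖Ta‖ := by
  refine Tb.opNorm_le_bound (by positivity) fun x => ?_
  have hrow : ∀ i, ‖Tb x i‖ ≤ ‖(c • Ta (absLp x)) i‖ := fun i => calc
    ‖Tb x i‖ ≤ Tb (absLp x) i := hTb.abs_apply_le hb x i
    _ ≤ c * Ta (absLp x) i := by
      rw [hTb.apply_absLp_eq_tsum, hTa.apply_absLp_eq_tsum, ← tsum_mul_left]
      refine (hTb (absLp x) i).summable.tsum_le_tsum (fun j => ?_)
        ((hTa (absLp x) i).summable.mul_left c)
      rw [← mul_assoc]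
      exact mul_le_mul_of_nonneg_right (hba i j) (norm_nonneg _)
    _ ≤ ‖(c • Ta (absLp x)) i‖ := le_abs_self _
  calc ‖Tb x‖ ≤ ‖c • Ta (absLp x)‖ := lp.norm_mono exponent_pos.ne' hrow
    _ ≤ c * (‖Ta‖ * ‖absLp x‖) := by
      rw [norm_smul, Real.norm_of_nonneg hc]
      exact mul_le_mul_of_nonneg_left (Ta.le_opNorm _) hc
    _ = c * ‖Ta‖ * ‖x‖ := by rw [norm_absLp, mul_assoc]

theorem opNorm_hadPow_le_rpow (ha : ∀ i j, 0 ≤ a i j) {t u : ℝ} (ht : 0 < t) (htu : t ≤ u)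
    {St Su : lpSeq p →L[ℝ] lpSeq p} (hSt : Represents p (hadPow a t) St)
    (hSu : Represents p (hadPow a u) Su) :
    ‖Su‖ ≤ ‖St‖ ^ (u / t) := by
  have hs : 0 ≤ u / t - 1 := sub_nonneg.mpr ((one_le_div ht).mpr htu)
  have hsplit : ∀ r : ℝ, 0 ≤ r → r ^ (u / t) = r ^ (u / t - 1) * r := fun r hr => by
    rw [← Real.rpow_add_one' hr (by linarith), sub_add_cancel]
  have hentry : ∀ i j, hadPow a u i j ≤ ‖St‖ ^ (u / t - 1) * hadPow a t i j := by
    intro i j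
    have hat : 0 ≤ hadPow a t i j := Real.rpow_nonneg (ha i j) t
    have hpow : hadPow a u i j = hadPow a t i j ^ (u / t) := by
      rw [hadPow, hadPow, ← Real.rpow_mul (ha i j), mul_div_cancel₀ _ ht.ne']
    rw [hpow, hsplit _ hat]
    gcongr
    exact (le_abs_self _).trans (hSt.abs_le_opNorm i j)
  calc ‖Su‖ ≤ ‖St‖ ^ (u / t - 1) * ‖St‖ :=
        hSt.opNorm_le_mul_of_le (by positivity) (fun i j => Real.rpow_nonneg (ha i j) u) hentry hSu
    _ = ‖St‖ ^ (u / t) := (hsplit _ (norm_nonneg _)).symm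

end Represents

lemma norm_le_of_tsum_enorm_rpow_le (hp : p ≠ ∞) {f : lpSeq p} {C : ℝ} (hC : 0 ≤ C)
    (h : ∑' i, ‖f i‖ₑ ^ p.toReal ≤ ENNReal.ofReal C ^ p.toReal) : ‖f‖ ≤ C := by
  rw [tsum_enorm_rpow_eq hp, ENNReal.rpow_le_rpow_iff (toReal_exponent_pos hp), ← ofReal_norm,
    ENNReal.ofReal_le_ofReal_iff hC] at h
  exact h

theorem exists_represents_of_tsum_rpow_le (hp : p ≠ ∞) (c : ℕ → ℕ → ℝ) {C : ℝ} (hC : 0 ≤ C)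
    (h : ∀ x : lpSeq p,
      ∑' i, (∑' j, ‖c i j * x j‖ₑ) ^ p.toReal ≤ ENNReal.ofReal (C * ‖x‖) ^ p.toReal) :
    ∃ H : lpSeq p →L[ℝ] lpSeq p, Represents p c H ∧ ‖H‖ ≤ C := by
  have hq := toReal_exponent_pos hp
  have hsum : ∀ x : lpSeq p, ∀ i, Summable fun j => c i j * x j := by
    intro x i
    have hfin : (∑' j, ‖c i j * x j‖ₑ) ^ p.toReal ≠ ∞ :=
      ne_top_of_le_ne_top (by finiteness) ((ENNReal.le_tsum i).trans (h x))
    exact .of_norm <| tsum_enorm_ne_top_iff_summable_norm.mp <|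
      mt (ENNReal.rpow_eq_top_iff_of_pos hq).mpr hfin
  have hrows : ∀ x : lpSeq p, ∑' i, ‖∑' j, c i j * x j‖ₑ ^ p.toReal
      ≤ ENNReal.ofReal (C * ‖x‖) ^ p.toReal := fun x =>
    (ENNReal.tsum_le_tsum fun i =>
      ENNReal.rpow_le_rpow enorm_tsum_le_tsum_enorm hq.le).trans (h x)
  have hmem : ∀ x : lpSeq p, Memℓp (fun i => ∑' j, c i j * x j) p := fun x =>
    (memℓp_iff_tsum_enorm_rpow_ne_top hp).mpr (ne_top_of_le_ne_top (by finiteness) (hrows x))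
  let L : lpSeq p →ₗ[ℝ] lpSeq p :=
    { toFun x := ⟨fun i => ∑' j, c i j * x j, hmem x⟩
      map_add' x y := lp.ext <| funext fun i => by
        simp only [lp.coeFn_add, Pi.add_apply, mul_add]
        exact (hsum x i).tsum_add (hsum y i)
      map_smul' r x := lp.ext <| funext fun i => by
        simp only [lp.coeFn_smul, Pi.smul_apply, smul_eq_mul, RingHom.id_apply, mul_left_comm _ r]
        exact tsum_mul_left }
  have hL : ∀ x, ‖L x‖ ≤ C * ‖x‖ := fun x =>
    norm_le_of_tsum_enorm_rpow_le hp (by positivity) (hrows x)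
  exact ⟨L.mkContinuous C hL, fun x i => (hsum x i).hasSum, L.mkContinuous_norm_le hC hL⟩

lemma ENNReal.tsum_prod_rpow_le_prod_tsum_rpow {α ι : Type*} (s : Finset ι) (f : ι → α → ℝ≥0∞)
    {w : ι → ℝ} (hw : ∑ k ∈ s, w k = 1) (hw0 : ∀ k ∈ s, 0 ≤ w k) :
    ∑' n, ∏ k ∈ s, f k n ^ w k ≤ ∏ k ∈ s, (∑' n, f k n) ^ w k := by
  let _ : MeasurableSpace α := ⊤
  simpa [MeasureTheory.lintegral_count] using
    ENNReal.lintegral_prod_norm_pow_le (μ := MeasureTheory.Measure.count) s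
      (fun k _ => (measurable_from_top (f := f k)).aemeasurable) hw hw0

lemma ENNReal.prod_mul_rpow_one_div {m : ℕ} (hm : 0 < m) (y : Fin m → ℝ≥0∞) (z : ℝ≥0∞) :
    ∏ k, (y k * z) ^ (1 / (m : ℝ)) = (∏ k, y k ^ (1 / (m : ℝ))) * z := by
  simp_rw [ENNReal.mul_rpow_of_nonneg _ _ (by positivity : (0 : ℝ) ≤ 1 / m)]
  rw [Finset.prod_mul_distrib, Finset.prod_const, Finset.card_univ, Fintype.card_fin,
    ← ENNReal.rpow_natCast, ← ENNReal.rpow_mul, one_div_mul_cancel (by positivity),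
    ENNReal.rpow_one]

lemma enorm_prod_mul_eq_prod_rpow {m : ℕ} (hm : 0 < m) (a : Fin m → ℝ) (y : ℝ) :
    ‖(∏ k, a k) * y‖ₑ = ∏ k, ‖a k ^ (m : ℝ) * y‖ₑ ^ (1 / (m : ℝ)) := by
  have hroot : ∀ k, (‖a k‖ₑ ^ m) ^ (1 / (m : ℝ)) = ‖a k‖ₑ := fun k => by
    rw [← ENNReal.rpow_natCast, ← ENNReal.rpow_mul, mul_one_div_cancel (by positivity),
      ENNReal.rpow_one]
  simp_rw [Real.rpow_natCast, enorm_mul, enorm_pow, ENNReal.prod_mul_rpow_one_div hm, hroot]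
  simp [enorm, nnnorm_prod]

lemma tsum_enorm_hadProd_mul_le {m : ℕ} (hm : 0 < m)
    {A : Fin m → ℕ → ℕ → ℝ} (hA : ∀ k i j, 0 ≤ A k i j) {S : Fin m → lpSeq p →L[ℝ] lpSeq p}
    (hS : ∀ k, Represents p (hadPow (A k) m) (S k)) (x : lpSeq p) (i : ℕ) :
    ∑' j, ‖hadProd A i j * x j‖ₑ ≤ ∏ k, ‖S k (absLp x) i‖ₑ ^ (1 / (m : ℝ)) := by
  have hw : ∑ _k : Fin m, 1 / (m : ℝ) = 1 := by simp [field]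
  simp_rw [(hS _).enorm_apply_absLp (fun i j => Real.rpow_nonneg (hA _ i j) _)]
  calc ∑' j, ‖hadProd A i j * x j‖ₑ
      = ∑' j, ∏ k, ‖hadPow (A k) m i j * x j‖ₑ ^ (1 / (m : ℝ)) :=
        tsum_congr fun j => enorm_prod_mul_eq_prod_rpow hm _ _
    _ ≤ _ := ENNReal.tsum_prod_rpow_le_prod_tsum_rpow _ _ hw fun _ _ => by positivity

theorem exists_represents_hadProd_s9 (hp : p ≠ ∞) {m : ℕ} (hm : 0 < m)
    {A : Fin m → ℕ → ℕ → ℝ} (hA : ∀ k i j, 0 ≤ A k i j) {S : Fin m → lpSeq p →L[ℝ] lpSeq p}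
    (hS : ∀ k, Represents p (hadPow (A k) m) (S k)) :
    ∃ H : lpSeq p →L[ℝ] lpSeq p, Represents p (hadProd A) H ∧
      ‖H‖ ≤ (∏ k, ‖S k‖) ^ (1 / (m : ℝ)) := by
  have hq := toReal_exponent_pos hp
  have hw : ∑ _k : Fin m, 1 / (m : ℝ) = 1 := by simp [field]
  have hswap : ∀ y : Fin m → ℝ≥0∞,
      (∏ k, y k ^ (1 / (m : ℝ))) ^ p.toReal = ∏ k, (y k ^ p.toReal) ^ (1 / (m : ℝ)) := by
    intro y
    simp_rw [← ENNReal.prod_rpow_of_nonneg hq.le, ← ENNReal.rpow_mul, mul_comm]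
  refine exists_represents_of_tsum_rpow_le hp _ (by positivity) fun x => ?_
  calc ∑' i, (∑' j, ‖hadProd A i j * x j‖ₑ) ^ p.toReal
      ≤ ∑' i, (∏ k, ‖S k (absLp x) i‖ₑ ^ (1 / (m : ℝ))) ^ p.toReal := by
        gcongr with i
        exact tsum_enorm_hadProd_mul_le hm hA hS x i
    _ ≤ ∏ k, (∑' i, ‖S k (absLp x) i‖ₑ ^ p.toReal) ^ (1 / (m : ℝ)) := by
        simp_rw [hswap]
        exact ENNReal.tsum_prod_rpow_le_prod_tsum_rpow _ _ hw fun _ _ => by positivity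
    _ = (∏ k, ‖S k (absLp x)‖ₑ ^ (1 / (m : ℝ))) ^ p.toReal := by
        simp_rw [tsum_enorm_rpow_eq hp, hswap]
    _ ≤ (∏ k, (‖S k‖ₑ * ‖x‖ₑ) ^ (1 / (m : ℝ))) ^ p.toReal := by
        gcongr with k
        simpa only [← ofReal_norm, norm_absLp] using (S k).le_opENorm (absLp x)
    _ = ENNReal.ofReal ((∏ k, ‖S k‖) ^ (1 / (m : ℝ)) * ‖x‖) ^ p.toReal := by
        rw [ENNReal.prod_mul_rpow_one_div hm, ENNReal.ofReal_mul (by positivity), ofReal_norm,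
          ← ENNReal.ofReal_rpow_of_nonneg (by positivity) (by positivity),
          ENNReal.ofReal_prod_of_nonneg fun k _ => norm_nonneg _,
          ENNReal.prod_rpow_of_nonneg (by positivity)]
        simp_rw [ofReal_norm]

theorem prod_opNorm_hadPow_rpow_one_div_le {ι : Type*} [Fintype ι] {A : ι → ℕ → ℕ → ℝ}
    (hA : ∀ k i j, 0 ≤ A k i j) {t u : ℝ} (ht : 0 < t) (htu : t ≤ u)
    {St Su : ι → lpSeq p →L[ℝ] lpSeq p} (hSt : ∀ k, Represents p (hadPow (A k) t) (St k))
    (hSu : ∀ k, Represents p (hadPow (A k) u) (Su k)) :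
    (∏ k, ‖Su k‖) ^ (1 / u) ≤ (∏ k, ‖St k‖) ^ (1 / t) := by
  have hu : 0 < u := ht.trans_le htu
  have hprod : ∏ k, ‖Su k‖ ≤ (∏ k, ‖St k‖) ^ (u / t) := by
    rw [← Real.finsetProd_rpow _ _ fun k _ => norm_nonneg _]
    exact Finset.prod_le_prod (fun k _ => norm_nonneg _) fun k _ =>
      (hSt k).opNorm_hadPow_le_rpow (hA k) ht htu (hSu k)
  calc (∏ k, ‖Su k‖) ^ (1 / u) ≤ ((∏ k, ‖St k‖) ^ (u / t)) ^ (1 / u) := by gcongr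
    _ = (∏ k, ‖St k‖) ^ (1 / t) := by
      rw [← Real.rpow_mul (by positivity)]
      field_simp

end

theorem norm_hadamard_pow_function_decreasing_general
    (p : ℝ≥0∞) [Fact (1 ≤ p)] (hp : p ≠ ∞) (m : ℕ) (hm : 0 < m)
    (A : Fin m → ℕ → ℕ → ℝ) (hA : ∀ k i j, 0 ≤ A k i j)
    (S : ℝ → Fin m → lpSeq p →L[ℝ] lpSeq p)
    (hS : ∀ t : ℝ, 1 ≤ t → ∀ k, Represents p (hadPow (A k) t) (S t k)) :
    (∀ t u : ℝ, 1 ≤ t → t ≤ u →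
      (∏ k, ‖S u k‖) ^ (1 / u) ≤ (∏ k, ‖S t k‖) ^ (1 / t)) ∧
    ∃ H : lpSeq p →L[ℝ] lpSeq p,
      Represents p (hadProd A) H ∧
      ∀ t : ℝ, 1 ≤ t → t ≤ m → ‖H‖ ≤ (∏ k, ‖S t k‖) ^ (1 / t) := by
  have hdecr : ∀ t u : ℝ, 1 ≤ t → t ≤ u →
      (∏ k, ‖S u k‖) ^ (1 / u) ≤ (∏ k, ‖S t k‖) ^ (1 / t) := fun t u ht htu =>
    prod_opNorm_hadPow_rpow_one_div_le hA (zero_lt_one.trans_le ht) htu (hS t ht)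
      (hS u (ht.trans htu))
  obtain ⟨H, hH, hHnorm⟩ := exists_represents_hadProd_s9 hp hm hA (hS m (mod_cast hm))
  exact ⟨hdecr, H, hH, fun t ht htm => hHnorm.trans (hdecr t m ht htm)⟩

/-- `N(t) = (‖A₁^{(t)}‖⋯‖A_m^{(t)}‖)^{1/t}` is non-increasing on `[1,∞)`,
and `‖A₁∘⋯∘A_m‖ ≤ N(t)` for every `t ∈ [1,m]`. -/
theorem norm_hadamard_pow_function_decreasing
    (p : ℝ≥0∞) [Fact (1 ≤ p)] (hp : p ≠ ∞) (m : ℕ) (hm : 0 < m)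
    (A : Fin m → ℕ → ℕ → ℝ) (hA : ∀ k i j, 0 ≤ A k i j)
    (T : Fin m → lpSeq p →L[ℝ] lpSeq p) (hT : ∀ k, Represents p (A k) (T k))
    (S : ℝ → Fin m → lpSeq p →L[ℝ] lpSeq p)
    (hS : ∀ t : ℝ, 1 ≤ t → ∀ k, Represents p (hadPow (A k) t) (S t k)) :
    (∀ t u : ℝ, 1 ≤ t → t ≤ u →
      (∏ k, ‖S u k‖) ^ (1 / u) ≤ (∏ k, ‖S t k‖) ^ (1 / t)) ∧
    ∃ H : lpSeq p →L[ℝ] lpSeq p,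
      Represents p (hadProd A) H ∧
      ∀ t : ℝ, 1 ≤ t → t ≤ m → ‖H‖ ≤ (∏ k, ‖S t k‖) ^ (1 / t) :=
  norm_hadamard_pow_function_decreasing_general p hp m hm A hA S hS
end
end

section
/- Let A_1, ..., A_m be n×n matrices with non-negative real entries, and define r(t) = (ρ(A_1^{(t)}) ρ(A_2^{(t)}) ⋯ ρ(A_m^{(t)}))^{1/t} and N(t) = (‖A_1^{(t)}‖ ‖A_2^{(t)}‖ ⋯ ‖A_m^{(t)}‖)^{1/t} for t > 0, where ‖·‖ is the operator norm with respect to the Euclidean norm on ℂⁿ. Then r and N are decreasing (non-increasing) functions on (0, ∞); moreover ρ(A_1 ∘ A_2 ∘ ⋯ ∘ A_m) ≤ r(t) and ‖A_1 ∘ A_2 ∘ ⋯ ∘ A_m‖ ≤ N(t) for every t ∈ (0, m]. -/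
open scoped ENNReal NNReal BigOperators

noncomputable section

/-- Entrywise (Hadamard) power `A^{(t)}` of a real square matrix. -/
def matHadPow {n : ℕ} (a : Matrix (Fin n) (Fin n) ℝ) (t : ℝ) : Matrix (Fin n) (Fin n) ℝ :=
  Matrix.of fun i j => a i j ^ t

/-- Hadamard (entrywise) product of a finite family of real square matrices. -/
def matHadProd {n m : ℕ} (A : Fin m → Matrix (Fin n) (Fin n) ℝ) : Matrix (Fin n) (Fin n) ℝ :=
  Matrix.of fun i j => ∏ k, A k i j

/-- The bounded operator on the Euclidean space `ℂⁿ` induced by a real `n × n` matrix. -/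
def euclOp {n : ℕ} (a : Matrix (Fin n) (Fin n) ℝ) :
    EuclideanSpace ℂ (Fin n) →L[ℂ] EuclideanSpace ℂ (Fin n) :=
  Matrix.toEuclideanCLM (𝕜 := ℂ) (a.map Complex.ofReal)

/-!
For a non-negative matrix `B` and `α ≥ 1` we have `‖B^{(α)}‖ ≤ ‖B‖^α`: every entry of `B` is at
most `‖B‖`, so `B^{(α)} ≤ ‖B‖^{α-1} B` entrywise, and the Euclidean operator norm is monotone on
non-negative matrices. With `B = A_k^{(t)}` and `α = u/t` this gives `N(u) ≤ N(t)`. The Hadamard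
product `A₁ ∘ ⋯ ∘ A_m` is the entrywise geometric mean of the `A_k^{(m)}`, and Hölder's inequality,
used along each row and then over the rows, bounds the norm of a geometric mean by the geometric
mean of the norms; hence `‖A₁ ∘ ⋯ ∘ A_m‖ ≤ N(m) ≤ N(t)`. Both entrywise estimates survive matrix
powers (`(B^{(α)})^N ≤ (B^N)^{(α)}`, and likewise for geometric means), so Gelfand's formula
`ρ(T) = lim ‖T^N‖^{1/N}` carries them, and with them both claims, over to the spectral radius.
-/

open Filter Topology Matrix

namespace Real

lemma sum_rpow_le_rpow_sum {ι : Type*} (s : Finset ι) {f : ι → ℝ} (hf : ∀ i ∈ s, 0 ≤ f i)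
    {p : ℝ} (hp : 1 ≤ p) : ∑ i ∈ s, f i ^ p ≤ (∑ i ∈ s, f i) ^ p := by
  have hS : 0 ≤ ∑ i ∈ s, f i := Finset.sum_nonneg hf
  calc ∑ i ∈ s, f i ^ p = ∑ i ∈ s, f i ^ (p - 1) * f i := by
        refine Finset.sum_congr rfl fun i hi => ?_
        rw [← rpow_add_one' (hf i hi) (by linarith), sub_add_cancel]
    _ ≤ ∑ i ∈ s, (∑ j ∈ s, f j) ^ (p - 1) * f i :=
        Finset.sum_le_sum fun i hi => mul_le_mul_of_nonneg_right
          (rpow_le_rpow (hf i hi) (Finset.single_le_sum hf hi) (by linarith)) (hf i hi)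
    _ = (∑ i ∈ s, f i) ^ p := by
        rw [← Finset.mul_sum, ← rpow_add_one' hS (by linarith), sub_add_cancel]

lemma sum_prod_rpow_le_prod_sum_rpow {ι κ : Type*} [Fintype κ] (s : Finset ι)
    {f : κ → ι → ℝ} (hf : ∀ k, ∀ i ∈ s, 0 ≤ f k i) {w : κ → ℝ} (hw : ∀ k, 0 < w k)
    (hw₁ : ∑ k, w k = 1) : ∑ i ∈ s, ∏ k, f k i ^ w k ≤ ∏ k, (∑ i ∈ s, f k i) ^ w k := by
  by_cases hzero : ∃ k, ∑ i ∈ s, f k i = 0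
  · obtain ⟨k₀, hk₀⟩ := hzero
    have hf₀ : ∀ i ∈ s, f k₀ i = 0 := (Finset.sum_eq_zero_iff_of_nonneg (hf k₀)).mp hk₀
    rw [Finset.prod_eq_zero (Finset.mem_univ k₀) (by rw [hk₀, zero_rpow (hw k₀).ne'])]
    refine (Finset.sum_eq_zero fun i hi => Finset.prod_eq_zero (Finset.mem_univ k₀) ?_).le
    rw [hf₀ i hi, zero_rpow (hw k₀).ne']
  push Not at hzero
  set S := fun k => ∑ i ∈ s, f k i
  have hSpos : ∀ k, 0 < S k := fun k => (Finset.sum_nonneg (hf k)).lt_of_ne' (hzero k)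
  have amgm : ∀ i ∈ s, ∏ k, f k i ^ w k ≤ (∏ k, S k ^ w k) * ∑ k, w k * (f k i / S k) := by
    intro i hi
    have hq : ∀ k, 0 ≤ f k i / S k := fun k => div_nonneg (hf k i hi) (hSpos k).le
    calc ∏ k, f k i ^ w k = (∏ k, S k ^ w k) * ∏ k, (f k i / S k) ^ w k := by
          rw [← Finset.prod_mul_distrib]
          refine Finset.prod_congr rfl fun k _ => ?_
          rw [← mul_rpow (hSpos k).le (hq k), mul_div_cancel₀ _ (hSpos k).ne']
      _ ≤ (∏ k, S k ^ w k) * ∑ k, w k * (f k i / S k) := by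
          gcongr
          · exact Finset.prod_nonneg fun k _ => rpow_nonneg (hSpos k).le _
          · exact geom_mean_le_arith_mean_weighted _ _ _ (fun k _ => (hw k).le) hw₁
              fun k _ => hq k
  calc ∑ i ∈ s, ∏ k, f k i ^ w k
      ≤ ∑ i ∈ s, (∏ k, S k ^ w k) * ∑ k, w k * (f k i / S k) := Finset.sum_le_sum amgm
    _ = (∏ k, S k ^ w k) * ∑ k, w k * (S k / S k) := by
        rw [← Finset.mul_sum, Finset.sum_comm]
        simp_rw [← Finset.mul_sum, ← Finset.sum_div]
        rfl
    _ = ∏ k, S k ^ w k := by simp [div_self (hSpos _).ne', hw₁]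

lemma prod_rpow_one_div_le_of_le_rpow {κ : Type*} [Fintype κ] {f g : κ → ℝ}
    (hf : ∀ k, 0 ≤ f k) (hg : ∀ k, 0 ≤ g k) {t u : ℝ} (hu : 0 < u)
    (h : ∀ k, g k ≤ f k ^ (u / t)) : (∏ k, g k) ^ (1 / u) ≤ (∏ k, f k) ^ (1 / t) :=
  calc (∏ k, g k) ^ (1 / u) ≤ (∏ k, f k ^ (u / t)) ^ (1 / u) :=
        rpow_le_rpow (Finset.prod_nonneg fun k _ => hg k)
          (Finset.prod_le_prod (fun k _ => hg k) fun k _ => h k) (by positivity)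
    _ = (∏ k, f k) ^ (1 / t) := by
        rw [finsetProd_rpow _ _ fun k _ => hf k, ← rpow_mul (Finset.prod_nonneg fun k _ => hf k)]
        congr 1
        field_simp

end Real

section Entrywise

variable {n : ℕ}

@[simp]
lemma matHadPow_apply (a : Matrix (Fin n) (Fin n) ℝ) (t : ℝ) (i j : Fin n) :
    matHadPow a t i j = a i j ^ t := rfl

@[simp]
lemma matHadProd_apply {m : ℕ} (D : Fin m → Matrix (Fin n) (Fin n) ℝ) (i j : Fin n) :
    matHadProd D i j = ∏ k, D k i j := rfl

lemma matHadPow_nonneg {a : Matrix (Fin n) (Fin n) ℝ} (ha : ∀ i j, 0 ≤ a i j) (t : ℝ) :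
    ∀ i j, 0 ≤ matHadPow a t i j := fun i j => Real.rpow_nonneg (ha i j) t

lemma matHadProd_nonneg {m : ℕ} {D : Fin m → Matrix (Fin n) (Fin n) ℝ}
    (hD : ∀ k i j, 0 ≤ D k i j) : ∀ i j, 0 ≤ matHadProd D i j :=
  fun i j => Finset.prod_nonneg (s := Finset.univ) fun k _ => hD k i j

lemma mulVec_apply_nonneg {a : Matrix (Fin n) (Fin n) ℝ} (ha : ∀ i j, 0 ≤ a i j) {v : Fin n → ℝ}
    (hv : ∀ j, 0 ≤ v j) (i : Fin n) : 0 ≤ (a *ᵥ v) i :=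
  (mulVec_apply_eq_sum a v i).symm ▸ Finset.sum_nonneg fun j _ => mul_nonneg (ha i j) (hv j)

lemma matHadPow_matHadPow {a : Matrix (Fin n) (Fin n) ℝ} (ha : ∀ i j, 0 ≤ a i j) (s t : ℝ) :
    matHadPow (matHadPow a s) t = matHadPow a (s * t) := by
  ext i j
  simp [Real.rpow_mul (ha i j)]

lemma matHadPow_one (a : Matrix (Fin n) (Fin n) ℝ) : matHadPow a 1 = a := by
  ext i j
  simp

lemma matHadPow_pow_apply_le {a : Matrix (Fin n) (Fin n) ℝ} (ha : ∀ i j, 0 ≤ a i j) {α : ℝ}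
    (hα : 1 ≤ α) (N : ℕ) : ∀ i j, (matHadPow a α ^ N) i j ≤ matHadPow (a ^ N) α i j := by
  induction N with
  | zero =>
    intro i j
    by_cases h : i = j <;> simp [h, Real.zero_rpow (by linarith : α ≠ 0)]
  | succ N ih =>
    intro i j
    have hN := pow_apply_nonneg ha N
    calc (matHadPow a α ^ (N + 1)) i j = ∑ l, (matHadPow a α ^ N) i l * a l j ^ α := by
          rw [pow_succ, Matrix.mul_apply]; rfl
      _ ≤ ∑ l, ((a ^ N) i l * a l j) ^ α := by
          refine Finset.sum_le_sum fun l _ => ?_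
          rw [Real.mul_rpow (hN i l) (ha l j)]
          exact mul_le_mul_of_nonneg_right (ih i l) (Real.rpow_nonneg (ha l j) α)
      _ ≤ (∑ l, (a ^ N) i l * a l j) ^ α :=
          Real.sum_rpow_le_rpow_sum _ (fun l _ => mul_nonneg (hN i l) (ha l j)) hα
      _ = matHadPow (a ^ (N + 1)) α i j := by rw [pow_succ, matHadPow_apply, Matrix.mul_apply]

lemma matHadProd_pow_apply_le {m : ℕ} {D : Fin m → Matrix (Fin n) (Fin n) ℝ}
    (hD : ∀ k i j, 0 ≤ D k i j) {w : Fin m → ℝ} (hw : ∀ k, 0 < w k) (hw₁ : ∑ k, w k = 1)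
    (N : ℕ) : ∀ i j, ((matHadProd fun k => matHadPow (D k) (w k)) ^ N) i j ≤
      matHadProd (fun k => matHadPow (D k ^ N) (w k)) i j := by
  induction N with
  | zero =>
    intro i j
    by_cases h : i = j
    · simp [h]
    · simpa [Matrix.one_apply_ne h] using
        Finset.prod_nonneg fun k _ => Real.rpow_nonneg (le_refl (0 : ℝ)) (w k)
  | succ N ih =>
    intro i j
    have hN k := pow_apply_nonneg (hD k) N
    calc ((matHadProd fun k => matHadPow (D k) (w k)) ^ (N + 1)) i j
        = ∑ l, ((matHadProd fun k => matHadPow (D k) (w k)) ^ N) i l *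
            ∏ k, D k l j ^ w k := by
          rw [pow_succ, Matrix.mul_apply]; rfl
      _ ≤ ∑ l, ∏ k, ((D k ^ N) i l * D k l j) ^ w k := by
          refine Finset.sum_le_sum fun l _ => ?_
          simp_rw [Real.mul_rpow (hN _ i l) (hD _ l j), Finset.prod_mul_distrib]
          exact mul_le_mul_of_nonneg_right (ih i l)
            (Finset.prod_nonneg fun k _ => Real.rpow_nonneg (hD k l j) _)
      _ ≤ ∏ k, (∑ l, (D k ^ N) i l * D k l j) ^ w k :=
          Real.sum_prod_rpow_le_prod_sum_rpow _
            (fun k l _ => mul_nonneg (hN k i l) (hD k l j)) hw hw₁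
      _ = matHadProd (fun k => matHadPow (D k ^ (N + 1)) (w k)) i j := by
          simp [pow_succ, Matrix.mul_apply]

end Entrywise

section EuclideanOperatorNorm

variable {n : ℕ}

lemma euclOp_apply (a : Matrix (Fin n) (Fin n) ℝ) (x : EuclideanSpace ℂ (Fin n)) (i : Fin n) :
    euclOp a x i = ∑ j, (a i j : ℂ) * x j := rfl

lemma euclOp_pow (a : Matrix (Fin n) (Fin n) ℝ) (N : ℕ) : euclOp (a ^ N) = euclOp a ^ N := by
  have h : (a ^ N).map Complex.ofReal = a.map Complex.ofReal ^ N :=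
    map_pow Complex.ofRealHom.mapMatrix a N
  rw [euclOp, h, map_pow]
  rfl

lemma euclOp_smul (s : ℝ) (a : Matrix (Fin n) (Fin n) ℝ) :
    euclOp (s • a) = (s : ℂ) • euclOp a := by
  rw [euclOp, euclOp, ← map_smul]
  congr 1
  ext i j
  simp

lemma sum_sq_mulVec_le_norm_euclOp_sq (a : Matrix (Fin n) (Fin n) ℝ) (v : Fin n → ℝ) :
    ∑ i, (a *ᵥ v) i ^ 2 ≤ ‖euclOp a‖ ^ 2 * ∑ j, v j ^ 2 := by
  set x : EuclideanSpace ℂ (Fin n) := WithLp.toLp 2 fun j => (v j : ℂ)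
  have hx : ‖x‖ ^ 2 = ∑ j, v j ^ 2 := by
    simp [x, EuclideanSpace.norm_eq, Real.sq_sqrt (Finset.sum_nonneg fun _ _ => sq_nonneg _)]
  have hax : ‖euclOp a x‖ ^ 2 = ∑ i, (a *ᵥ v) i ^ 2 := by
    simp only [x, EuclideanSpace.norm_eq, Real.sq_sqrt (Finset.sum_nonneg fun _ _ => sq_nonneg _),
      euclOp_apply]
    simp_rw [← Complex.ofReal_mul, ← Complex.ofReal_sum, Complex.norm_real, Real.norm_eq_abs,
      sq_abs]
    rfl
  rw [← hx, ← hax, ← mul_pow]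
  exact pow_le_pow_left₀ (norm_nonneg _) ((euclOp a).le_opNorm x) 2

lemma norm_euclOp_le_of_forall_nonneg {a : Matrix (Fin n) (Fin n) ℝ} (ha : ∀ i j, 0 ≤ a i j)
    {c : ℝ} (hc : 0 ≤ c)
    (h : ∀ v : Fin n → ℝ, (∀ j, 0 ≤ v j) → ∑ i, (a *ᵥ v) i ^ 2 ≤ c ^ 2 * ∑ j, v j ^ 2) :
    ‖euclOp a‖ ≤ c := by
  refine (euclOp a).opNorm_le_bound hc fun x => ?_
  -- as `a ≥ 0`, `|(a x) i| ≤ (a v) i` for the vector `v` of moduli of `x`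
  set v : Fin n → ℝ := fun j => ‖x j‖
  have hax : ‖euclOp a x‖ ^ 2 ≤ ∑ i, (a *ᵥ v) i ^ 2 := by
    rw [EuclideanSpace.norm_eq, Real.sq_sqrt (Finset.sum_nonneg fun _ _ => sq_nonneg _)]
    refine Finset.sum_le_sum fun i _ => pow_le_pow_left₀ (norm_nonneg _) ?_ 2
    calc ‖euclOp a x i‖ = ‖∑ j, (a i j : ℂ) * x j‖ := rfl
      _ ≤ ∑ j, ‖(a i j : ℂ) * x j‖ := norm_sum_le _ _
      _ = (a *ᵥ v) i := by simp [Matrix.mulVec, dotProduct, abs_of_nonneg (ha i _), v]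
  have hx : ‖x‖ ^ 2 = ∑ j, v j ^ 2 := by
    rw [EuclideanSpace.norm_eq, Real.sq_sqrt (Finset.sum_nonneg fun _ _ => sq_nonneg _)]
  have := hax.trans (h v fun j => norm_nonneg _)
  rw [← hx, ← mul_pow] at this
  exact le_of_pow_le_pow_left₀ two_ne_zero (by positivity) this

lemma norm_euclOp_mono {a b : Matrix (Fin n) (Fin n) ℝ} (ha : ∀ i j, 0 ≤ a i j)
    (hab : ∀ i j, a i j ≤ b i j) : ‖euclOp a‖ ≤ ‖euclOp b‖ := by
  refine norm_euclOp_le_of_forall_nonneg ha (norm_nonneg _) fun v hv => ?_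
  refine le_trans (Finset.sum_le_sum fun i _ => ?_) (sum_sq_mulVec_le_norm_euclOp_sq b v)
  refine pow_le_pow_left₀ (mulVec_apply_nonneg ha hv i) ?_ 2
  rw [mulVec_apply_eq_sum, mulVec_apply_eq_sum]
  exact Finset.sum_le_sum fun j _ => mul_le_mul_of_nonneg_right (hab i j) (hv j)

lemma abs_le_norm_euclOp (a : Matrix (Fin n) (Fin n) ℝ) (i j : Fin n) :
    |a i j| ≤ ‖euclOp a‖ := by
  have h := sum_sq_mulVec_le_norm_euclOp_sq a (Pi.single j 1)
  rw [Matrix.mulVec_single_one] at h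
  simp only [col_apply, Pi.single_apply, ite_pow, one_pow, ne_eq, OfNat.ofNat_ne_zero,
    not_false_eq_true, zero_pow, Finset.sum_ite_eq', Finset.mem_univ, ↓reduceIte, mul_one] at h
  rw [← abs_norm, ← sq_le_sq]
  exact (Finset.single_le_sum (fun i _ => sq_nonneg (a i j)) (Finset.mem_univ i)).trans h

lemma norm_euclOp_matHadPow_le {a : Matrix (Fin n) (Fin n) ℝ} (ha : ∀ i j, 0 ≤ a i j) {α : ℝ}
    (hα : 1 ≤ α) : ‖euclOp (matHadPow a α)‖ ≤ ‖euclOp a‖ ^ α := by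
  set s := ‖euclOp a‖ ^ (α - 1)
  have hs : 0 ≤ s := Real.rpow_nonneg (norm_nonneg _) _
  have hdom : ∀ i j, matHadPow a α i j ≤ (s • a) i j := by
    intro i j
    rw [matHadPow_apply, Matrix.smul_apply, smul_eq_mul,
      ← sub_add_cancel α 1, Real.rpow_add_one' (ha i j) (by linarith)]
    exact mul_le_mul_of_nonneg_right (Real.rpow_le_rpow (ha i j)
      ((le_abs_self _).trans (abs_le_norm_euclOp a i j)) (by linarith)) (ha i j)
  calc ‖euclOp (matHadPow a α)‖ ≤ ‖euclOp (s • a)‖ :=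
        norm_euclOp_mono (matHadPow_nonneg ha α) hdom
    _ = ‖euclOp a‖ ^ α := by
        rw [euclOp_smul, norm_smul, Complex.norm_real, Real.norm_of_nonneg hs,
          ← Real.rpow_add_one' (norm_nonneg _) (by linarith), sub_add_cancel]

lemma norm_euclOp_matHadProd_matHadPow_le {m : ℕ} {D : Fin m → Matrix (Fin n) (Fin n) ℝ}
    (hD : ∀ k i j, 0 ≤ D k i j) {w : Fin m → ℝ} (hw : ∀ k, 0 < w k) (hw₁ : ∑ k, w k = 1) :
    ‖euclOp (matHadProd fun k => matHadPow (D k) (w k))‖ ≤ ∏ k, ‖euclOp (D k)‖ ^ w k := by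
  have prod_rpow_sq : ∀ x : Fin m → ℝ, (∀ k, 0 ≤ x k) →
      (∏ k, x k ^ w k) ^ 2 = ∏ k, (x k ^ 2) ^ w k := fun x hx => by
    rw [← Finset.prod_pow]
    exact Finset.prod_congr rfl fun k _ => Real.rpow_pow_comm (hx k) _ 2
  refine norm_euclOp_le_of_forall_nonneg
    (matHadProd_nonneg fun k => matHadPow_nonneg (hD k) (w k))
    (Finset.prod_nonneg fun k _ => Real.rpow_nonneg (norm_nonneg _) _) fun v hv => ?_
  have hv₁ : ∀ j, v j = ∏ k, v j ^ w k := fun j => by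
    rw [← Real.rpow_sum_of_nonneg (hv j) fun k _ => (hw k).le, hw₁, Real.rpow_one]
  have row : ∀ i, ((matHadProd fun k => matHadPow (D k) (w k)) *ᵥ v) i ≤
      ∏ k, (D k *ᵥ v) i ^ w k := fun i =>
    calc ((matHadProd fun k => matHadPow (D k) (w k)) *ᵥ v) i
        = ∑ j, ∏ k, (D k i j * v j) ^ w k := by
          rw [mulVec_apply_eq_sum]
          refine Finset.sum_congr rfl fun j _ => ?_
          simp_rw [Real.mul_rpow (hD _ i j) (hv j), Finset.prod_mul_distrib, ← hv₁]
          rfl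
      _ ≤ ∏ k, (D k *ᵥ v) i ^ w k :=
          Real.sum_prod_rpow_le_prod_sum_rpow _
            (fun k j _ => mul_nonneg (hD k i j) (hv j)) hw hw₁
  have hS : 0 ≤ ∑ j, v j ^ 2 := Finset.sum_nonneg fun j _ => sq_nonneg _
  calc ∑ i, ((matHadProd fun k => matHadPow (D k) (w k)) *ᵥ v) i ^ 2
      ≤ ∑ i, ∏ k, ((D k *ᵥ v) i ^ 2) ^ w k := by
        refine Finset.sum_le_sum fun i _ => ?_
        rw [← prod_rpow_sq _ fun k => mulVec_apply_nonneg (hD k) hv i]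
        exact pow_le_pow_left₀ (mulVec_apply_nonneg
          (matHadProd_nonneg fun k => matHadPow_nonneg (hD k) (w k)) hv i) (row i) 2
    _ ≤ ∏ k, (∑ i, (D k *ᵥ v) i ^ 2) ^ w k :=
        Real.sum_prod_rpow_le_prod_sum_rpow _ (fun k i _ => sq_nonneg _) hw hw₁
    _ ≤ ∏ k, (‖euclOp (D k)‖ ^ 2 * ∑ j, v j ^ 2) ^ w k :=
        Finset.prod_le_prod (fun k _ => Real.rpow_nonneg (Finset.sum_nonneg fun i _ =>
          sq_nonneg _) _) fun k _ => Real.rpow_le_rpow (Finset.sum_nonneg fun i _ =>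
            sq_nonneg _) (sum_sq_mulVec_le_norm_euclOp_sq (D k) v) (hw k).le
    _ = (∏ k, ‖euclOp (D k)‖ ^ w k) ^ 2 * ∑ j, v j ^ 2 := by
        simp_rw [Real.mul_rpow (sq_nonneg _) hS, Finset.prod_mul_distrib,
          prod_rpow_sq _ fun k => norm_nonneg (euclOp (D k)),
          ← Real.rpow_sum_of_nonneg hS fun k _ => (hw k).le, hw₁, Real.rpow_one]

end EuclideanOperatorNorm

section SpectralRadius

variable {𝒜 : Type*} [NormedRing 𝒜] [NormedAlgebra ℂ 𝒜] [CompleteSpace 𝒜]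

lemma spectralRadius_ne_top (a : 𝒜) : spectralRadius ℂ a ≠ ∞ :=
  ne_top_of_le_ne_top (by finiteness) (spectrum.spectralRadius_le_pow_nnnorm_pow_one_div ℂ a 0)

lemma tendsto_norm_pow_rpow_one_div_toReal_spectralRadius (a : 𝒜) :
    Tendsto (fun N : ℕ => ‖a ^ N‖ ^ (1 / N : ℝ)) atTop (𝓝 (spectralRadius ℂ a).toReal) :=
  ((ENNReal.tendsto_toReal (spectralRadius_ne_top a)).comp
    (spectrum.pow_norm_pow_one_div_tendsto_nhds_spectralRadius a)).congr fun N =>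
      ENNReal.toReal_ofReal (by positivity)

lemma toReal_spectralRadius_le_prod_rpow {κ : Type*} [Fintype κ] {a : 𝒜} {b : κ → 𝒜}
    {w : κ → ℝ} (hw : ∀ k, 0 ≤ w k) (h : ∀ N : ℕ, ‖a ^ N‖ ≤ ∏ k, ‖b k ^ N‖ ^ w k) :
    (spectralRadius ℂ a).toReal ≤ ∏ k, (spectralRadius ℂ (b k)).toReal ^ w k := by
  refine le_of_tendsto_of_tendsto' (tendsto_norm_pow_rpow_one_div_toReal_spectralRadius a)
    (tendsto_finsetProd _ fun k _ =>
      (tendsto_norm_pow_rpow_one_div_toReal_spectralRadius (b k)).rpow_const (.inr (hw k)))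
    fun N => ?_
  calc ‖a ^ N‖ ^ (1 / N : ℝ) ≤ (∏ k, ‖b k ^ N‖ ^ w k) ^ (1 / N : ℝ) := by gcongr; exact h N
    _ = ∏ k, (‖b k ^ N‖ ^ (1 / N : ℝ)) ^ w k := by
        rw [← Real.finsetProd_rpow _ _ fun k _ => by positivity]
        refine Finset.prod_congr rfl fun k _ => ?_
        rw [← Real.rpow_mul (norm_nonneg _), ← Real.rpow_mul (norm_nonneg _), mul_comm]

end SpectralRadius

section SpectralRadiusOfHadamard

variable {n : ℕ}

lemma toReal_spectralRadius_euclOp_matHadPow_le {a : Matrix (Fin n) (Fin n) ℝ}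
    (ha : ∀ i j, 0 ≤ a i j) {α : ℝ} (hα : 1 ≤ α) :
    (spectralRadius ℂ (euclOp (matHadPow a α))).toReal ≤
      (spectralRadius ℂ (euclOp a)).toReal ^ α := by
  simpa using toReal_spectralRadius_le_prod_rpow (κ := Unit) (b := fun _ => euclOp a)
    (fun _ => zero_le_one.trans hα) fun N => by
      simpa [← euclOp_pow] using
        (norm_euclOp_mono (pow_apply_nonneg (matHadPow_nonneg ha α) N)
          (matHadPow_pow_apply_le ha hα N)).trans
          (norm_euclOp_matHadPow_le (pow_apply_nonneg ha N) hα)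

lemma toReal_spectralRadius_euclOp_matHadProd_matHadPow_le {m : ℕ}
    {D : Fin m → Matrix (Fin n) (Fin n) ℝ} (hD : ∀ k i j, 0 ≤ D k i j) {w : Fin m → ℝ}
    (hw : ∀ k, 0 < w k) (hw₁ : ∑ k, w k = 1) :
    (spectralRadius ℂ (euclOp (matHadProd fun k => matHadPow (D k) (w k)))).toReal ≤
      ∏ k, (spectralRadius ℂ (euclOp (D k))).toReal ^ w k := by
  refine toReal_spectralRadius_le_prod_rpow (fun k => (hw k).le) fun N => ?_
  simp_rw [← euclOp_pow]
  exact (norm_euclOp_mono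
    (pow_apply_nonneg (matHadProd_nonneg fun k => matHadPow_nonneg (hD k) (w k)) N)
    (matHadProd_pow_apply_le hD hw hw₁ N)).trans
    (norm_euclOp_matHadProd_matHadPow_le (fun k => pow_apply_nonneg (hD k) N) hw hw₁)

end SpectralRadiusOfHadamard

section HadamardPowerMean

variable {n m : ℕ}

/-- For `X = ρ` and `X = ‖·‖` this is `r(t)` and `N(t)` respectively. -/
def hadPowMean (X : Matrix (Fin n) (Fin n) ℝ → ℝ) (A : Fin m → Matrix (Fin n) (Fin n) ℝ)
    (t : ℝ) : ℝ :=
  (∏ k, X (matHadPow (A k) t)) ^ (1 / t)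

variable {X : Matrix (Fin n) (Fin n) ℝ → ℝ} {A : Fin m → Matrix (Fin n) (Fin n) ℝ}

lemma antitoneOn_hadPowMean (hX : ∀ a, 0 ≤ X a)
    (hX_pow : ∀ a : Matrix (Fin n) (Fin n) ℝ, (∀ i j, 0 ≤ a i j) →
      ∀ α : ℝ, 1 ≤ α → X (matHadPow a α) ≤ X a ^ α)
    (hA : ∀ k i j, 0 ≤ A k i j) : AntitoneOn (hadPowMean X A) (Set.Ioi 0) := by
  intro t ht u hu htu
  refine Real.prod_rpow_one_div_le_of_le_rpow (fun k => hX _) (fun k => hX _) hu fun k => ?_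
  have hu_eq : matHadPow (A k) u = matHadPow (matHadPow (A k) t) (u / t) := by
    rw [matHadPow_matHadPow (hA k), mul_div_cancel₀ _ (ne_of_gt ht)]
  rw [hu_eq]
  exact hX_pow _ (matHadPow_nonneg (hA k) t) _ ((one_le_div ht).mpr htu)

lemma le_hadPowMean (hm : 0 < m) (hX : ∀ a, 0 ≤ X a)
    (hX_anti : AntitoneOn (hadPowMean X A) (Set.Ioi 0))
    (hX_holder : ∀ D : Fin m → Matrix (Fin n) (Fin n) ℝ, (∀ k i j, 0 ≤ D k i j) →
      ∀ w : Fin m → ℝ, (∀ k, 0 < w k) → ∑ k, w k = 1 →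
        X (matHadProd fun k => matHadPow (D k) (w k)) ≤ ∏ k, X (D k) ^ w k)
    (hA : ∀ k i j, 0 ≤ A k i j) {t : ℝ} (ht : 0 < t) (htm : t ≤ m) :
    X (matHadProd A) ≤ hadPowMean X A t := by
  have hm' : (0 : ℝ) < m := Nat.cast_pos.mpr hm
  have hA_eq : matHadProd A = matHadProd fun k => matHadPow (matHadPow (A k) m) (1 / m) := by
    simp_rw [matHadPow_matHadPow (hA _), mul_one_div_cancel hm'.ne', matHadPow_one]
  calc X (matHadProd A) ≤ ∏ k, X (matHadPow (A k) m) ^ (1 / m : ℝ) := by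
        rw [hA_eq]
        exact hX_holder _ (fun k => matHadPow_nonneg (hA k) m) _ (fun _ => by positivity)
          (by simp [Finset.sum_const, hm'.ne'])
    _ = hadPowMean X A m := (Real.finsetProd_rpow _ _ fun k _ => hX _) _
    _ ≤ hadPowMean X A t := hX_anti ht (ht.trans_le htm) htm

end HadamardPowerMean

/-- for non-negative `n × n` matrices `A₁, …, A_m`, the functions
`r(t) = (ρ(A₁^{(t)})⋯ρ(A_m^{(t)}))^{1/t}` and `N(t) = (‖A₁^{(t)}‖⋯‖A_m^{(t)}‖)^{1/t}`
are non-increasing on `(0,∞)`, and `ρ(A₁∘⋯∘A_m) ≤ r(t)`, `‖A₁∘⋯∘A_m‖ ≤ N(t)` for all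
`t ∈ (0,m]`; here `ρ` and `‖·‖` are taken with respect to the Euclidean norm on `ℂⁿ`. -/
theorem matrix_hadamard_pow_functions_decreasing
    (n m : ℕ) (hm : 0 < m)
    (A : Fin m → Matrix (Fin n) (Fin n) ℝ) (hA : ∀ k i j, 0 ≤ A k i j) :
    (∀ t u : ℝ, 0 < t → t ≤ u →
      (∏ k, spectralRadius ℂ (euclOp (matHadPow (A k) u))) ^ (1 / u) ≤
        (∏ k, spectralRadius ℂ (euclOp (matHadPow (A k) t))) ^ (1 / t) ∧
      (∏ k, ‖euclOp (matHadPow (A k) u)‖) ^ (1 / u) ≤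
        (∏ k, ‖euclOp (matHadPow (A k) t)‖) ^ (1 / t)) ∧
    ∀ t : ℝ, 0 < t → t ≤ m →
      spectralRadius ℂ (euclOp (matHadProd A)) ≤
        (∏ k, spectralRadius ℂ (euclOp (matHadPow (A k) t))) ^ (1 / t) ∧
      ‖euclOp (matHadProd A)‖ ≤ (∏ k, ‖euclOp (matHadPow (A k) t)‖) ^ (1 / t) := by
  set ρ : Matrix (Fin n) (Fin n) ℝ → ℝ := fun a => (spectralRadius ℂ (euclOp a)).toReal
  have hρ : ∀ a, 0 ≤ ρ a := fun a => ENNReal.toReal_nonneg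
  have hρ_anti : AntitoneOn (hadPowMean ρ A) (Set.Ioi 0) := antitoneOn_hadPowMean hρ
    (fun _ ha _ hα => toReal_spectralRadius_euclOp_matHadPow_le ha hα) hA
  have hN : ∀ a : Matrix (Fin n) (Fin n) ℝ, 0 ≤ ‖euclOp a‖ := fun a => norm_nonneg _
  have hN_anti : AntitoneOn (hadPowMean (fun a => ‖euclOp a‖) A) (Set.Ioi 0) :=
    antitoneOn_hadPowMean hN (fun _ ha _ hα => norm_euclOp_matHadPow_le ha hα) hA
  have hr : ∀ t : ℝ, 0 < t → (∏ k, spectralRadius ℂ (euclOp (matHadPow (A k) t))) ^ (1 / t) =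
      ENNReal.ofReal (hadPowMean ρ A t) := fun t ht => by
    rw [← ENNReal.ofReal_toReal (ENNReal.rpow_ne_top_of_nonneg (by positivity)
      (ENNReal.prod_ne_top fun k _ => spectralRadius_ne_top _)), ← ENNReal.toReal_rpow,
      ENNReal.toReal_prod]
    rfl
  refine ⟨fun t u ht htu => ⟨?_, hN_anti ht (ht.trans_le htu) htu⟩,
    fun t ht htm => ⟨?_, le_hadPowMean hm hN hN_anti
      (fun _ hD _ hw hw₁ => norm_euclOp_matHadProd_matHadPow_le hD hw hw₁) hA ht htm⟩⟩
  · rw [hr t ht, hr u (ht.trans_le htu)]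
    exact ENNReal.ofReal_le_ofReal (hρ_anti ht (ht.trans_le htu) htu)
  · rw [hr t ht, ← ENNReal.ofReal_toReal (spectralRadius_ne_top _)]
    exact ENNReal.ofReal_le_ofReal (le_hadPowMean hm hρ hρ_anti (fun _ hD _ hw hw₁ =>
      toReal_spectralRadius_euclOp_matHadProd_matHadPow_le hD hw hw₁) hA ht htm)
end
end
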